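/- arXiv:1411.5417 — 5 statements merged into one kernel-verified Lean document; each statement's English description precedes it below -/
import Mathlib

section
/- Mirror descent one-step progress bound: Let C ⊆ ℝ^p be a convex set, N a norm on ℝ^p, and Ψ : ℝ^p → ℝ a differentiable function that is 1-strongly convex with respect to N on C. Let η > 0, g ∈ ℝ^p, θ_t ∈ C, and suppose θ_{t+1} ∈ C attains the minimum over C of the function θ ↦ ⟨η·g − ∇Ψ(θ_t), θ⟩ + Ψ(θ). Then for every θ* ∈ C, η·⟨g, θ_t − θ*⟩ ≤ B_Ψ(θ*, θ_t) − B_Ψ(θ*, θ_{t+1}) + (η²/2)·N*(g)². -/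
open scoped BigOperators
open RealInnerProductSpace

/-!
Since `θt1` minimises a differentiable function over the convex set `C`, the first-order
condition gives `⟪η • g - Ψ' θt + Ψ' θt1, θs - θt1⟫ ≥ 0`; by the three-point identity for the
Bregman divergence this reads `η ⟪g, θt1 - θs⟫ ≤ B(θs, θt) - B(θs, θt1) - B(θt1, θt)`.
The remaining term `η ⟪g, θt - θt1⟫` is at most `|η| N*(g) N(θt1 - θt)`, hence by Young's
inequality at most `η² N*(g)² / 2 + N(θt1 - θt)² / 2`, and strong convexity bounds the last
summand by `B(θt1, θt)`.
-/

/-- The dual norm `N*(g) = sup { ⟨g, v⟩ : N(v) ≤ 1 }` of a norm `N` on `ℝ^p`. -/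
noncomputable def dualNorm {p : ℕ} (N : EuclideanSpace ℝ (Fin p) → ℝ)
    (g : EuclideanSpace ℝ (Fin p)) : ℝ :=
  sSup {r : ℝ | ∃ v : EuclideanSpace ℝ (Fin p), N v ≤ 1 ∧ r = ⟪g, v⟫}

/-- Bregman divergence `B_Ψ(x, y) = Ψ(x) − Ψ(y) − ⟨∇Ψ(y), x − y⟩` where `Ψ'` is the
gradient of `Ψ`. -/
noncomputable def breg {p : ℕ} (Ψ : EuclideanSpace ℝ (Fin p) → ℝ)
    (Ψ' : EuclideanSpace ℝ (Fin p) → EuclideanSpace ℝ (Fin p))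
    (x y : EuclideanSpace ℝ (Fin p)) : ℝ :=
  Ψ x - Ψ y - ⟪Ψ' y, x - y⟫

/-- `N` is a norm on `ℝ^p`. -/
def IsNorm {p : ℕ} (N : EuclideanSpace ℝ (Fin p) → ℝ) : Prop :=
  (∀ x y, N (x + y) ≤ N x + N y) ∧ (∀ (c : ℝ) (x : EuclideanSpace ℝ (Fin p)),
    N (c • x) = |c| * N x) ∧ (∀ x, N x = 0 ↔ x = 0)

section FirstOrder

variable {E : Type*} [NormedAddCommGroup E] [InnerProductSpace ℝ E] [CompleteSpace E]

theorem HasGradientAt.inner_const_add {f : E → ℝ} {f' x : E} (hf : HasGradientAt f f' x)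
    (w : E) : HasGradientAt (fun y => ⟪w, y⟫ + f y) (w + f') x := by
  rw [hasGradientAt_iff_hasFDerivAt, map_add]
  exact (innerSL ℝ w).hasFDerivAt.add hf.hasFDerivAt

theorem IsMinOn.inner_gradient_sub_nonneg {f : E → ℝ} {s : Set E} {f' x y : E}
    (hmin : IsMinOn f s y) (hs : Convex ℝ s) (hf : HasGradientAt f f' y) (hx : x ∈ s)
    (hy : y ∈ s) : 0 ≤ ⟪f', x - y⟫ := by
  simpa using hmin.localize.hasFDerivWithinAt_nonneg hf.hasFDerivAt.hasFDerivWithinAt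
    (sub_mem_posTangentConeAt_of_segment_subset (hs.segment_subset hy hx))

theorem le_sub_sub_inner_of_strongConvex {f : E → ℝ} {f' x y : E} {c : ℝ}
    (hf : HasGradientAt f f' y)
    (hsc : ∀ α ∈ Set.Icc (0 : ℝ) 1,
      f (α • x + (1 - α) • y) ≤ α * f x + (1 - α) * f y - α * (1 - α) / 2 * c) :
    c / 2 ≤ f x - f y - ⟪f', x - y⟫ := by
  set φ : ℝ → ℝ := fun α => α * (f x - f y) - α * (1 - α) / 2 * c - f (α • x + (1 - α) • y)
  have hline : HasDerivAt (fun α : ℝ => α • x + (1 - α) • y) (x - y) 0 :=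
    (((hasDerivAt_id (0 : ℝ)).smul_const x).add
      (((hasDerivAt_id (0 : ℝ)).const_sub 1).smul_const y)).congr_deriv
      (by simp [sub_eq_add_neg])
  have hpoly : HasDerivAt (fun α : ℝ => α * (f x - f y) - α * (1 - α) / 2 * c)
      (f x - f y - c / 2) 0 :=
    (((hasDerivAt_id' (0 : ℝ)).mul_const (f x - f y)).sub
      ((((hasDerivAt_id' (0 : ℝ)).mul ((hasDerivAt_id' (0 : ℝ)).const_sub 1)).div_const 2).mul_const
        c)).congr_deriv (by ring)
  have hφ : HasDerivAt φ (f x - f y - c / 2 - ⟪f', x - y⟫) 0 :=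
    (hpoly.sub (hf.hasFDerivAt.comp_hasDerivAt_of_eq 0 hline (by simp))).congr_deriv (by simp)
  have hφ0 : φ 0 = -f y := by simp [φ]
  have hmin : IsMinOn φ (Set.Icc 0 1) 0 := fun α hα => by
    show φ 0 ≤ φ α
    rw [hφ0]
    dsimp only [φ]
    linarith [hsc α hα]
  have := hmin.inner_gradient_sub_nonneg (convex_Icc 0 1) hφ.hasGradientAt'
    (Set.right_mem_Icc.2 zero_le_one) (Set.left_mem_Icc.2 zero_le_one)
  simp only [sub_zero, RCLike.inner_apply, Real.ringHom_apply, one_mul] at this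
  linarith

end FirstOrder

theorem breg_sub_breg {p : ℕ} (Ψ : EuclideanSpace ℝ (Fin p) → ℝ)
    (Ψ' : EuclideanSpace ℝ (Fin p) → EuclideanSpace ℝ (Fin p))
    (x y z : EuclideanSpace ℝ (Fin p)) :
    breg Ψ Ψ' x y - breg Ψ Ψ' x z = breg Ψ Ψ' z y + ⟪Ψ' z - Ψ' y, x - z⟫ := by
  simp only [breg, inner_sub_left, inner_sub_right]
  ring

namespace IsNorm

variable {p : ℕ} {N : EuclideanSpace ℝ (Fin p) → ℝ}

def toSeminorm (hN : IsNorm N) : Seminorm ℝ (EuclideanSpace ℝ (Fin p)) :=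
  Seminorm.of N hN.1 fun c x => hN.2.1 c x

theorem pos (hN : IsNorm N) {v : EuclideanSpace ℝ (Fin p)} (hv : v ≠ 0) : 0 < N v :=
  (apply_nonneg hN.toSeminorm v).lt_of_ne' fun h => hv ((hN.2.2 v).1 h)

theorem continuous (hN : IsNorm N) : Continuous N :=
  hN.toSeminorm.convexOn.locallyLipschitz.continuous

theorem exists_norm_le_mul (hN : IsNorm N) : ∃ M, ∀ v, ‖v‖ ≤ M * N v := by
  obtain ⟨M, hM⟩ :=
    (isCompact_sphere (0 : EuclideanSpace ℝ (Fin p)) 1).exists_bound_of_continuousOn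
      (hN.continuous.continuousOn.inv₀ fun v hv =>
        (hN.pos (ne_zero_of_mem_unit_sphere ⟨v, hv⟩)).ne')
  refine ⟨M, fun v => ?_⟩
  rcases eq_or_ne v 0 with rfl | hv
  · simp [(hN.2.2 0).2 rfl]
  have hv' : 0 < ‖v‖ := norm_pos_iff.2 hv
  have hu : ‖v‖⁻¹ • v ∈ Metric.sphere (0 : EuclideanSpace ℝ (Fin p)) 1 := by
    simp [norm_smul, hv'.ne']
  have hNu : N (‖v‖⁻¹ • v) = ‖v‖⁻¹ * N v := by rw [hN.2.1, abs_of_pos (inv_pos.2 hv')]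
  have := hM _ hu
  rw [Pi.inv_apply, hNu, Real.norm_eq_abs, mul_inv, inv_inv,
    abs_of_pos (by positivity [hN.pos hv]), ← div_eq_mul_inv, div_le_iff₀ (hN.pos hv)] at this
  exact this

theorem bddAbove_inner (hN : IsNorm N) (g : EuclideanSpace ℝ (Fin p)) :
    BddAbove {r : ℝ | ∃ v : EuclideanSpace ℝ (Fin p), N v ≤ 1 ∧ r = ⟪g, v⟫} := by
  obtain ⟨M, hM⟩ := hN.exists_norm_le_mul
  refine ⟨‖g‖ * |M|, ?_⟩
  rintro _ ⟨v, hv, rfl⟩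
  have hMv : M * N v ≤ |M| :=
    (mul_le_mul_of_nonneg_right (le_abs_self M) (apply_nonneg hN.toSeminorm v)).trans
      (mul_le_of_le_one_right (abs_nonneg M) hv)
  calc ⟪g, v⟫ ≤ ‖g‖ * ‖v‖ := real_inner_le_norm g v
    _ ≤ ‖g‖ * |M| := mul_le_mul_of_nonneg_left ((hM v).trans hMv) (norm_nonneg g)

theorem inner_le_dualNorm_mul (hN : IsNorm N) (g v : EuclideanSpace ℝ (Fin p)) :
    ⟪g, v⟫ ≤ dualNorm N g * N v := by
  rcases eq_or_ne v 0 with rfl | hv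
  · simp [(hN.2.2 0).2 rfl]
  have hv' := hN.pos hv
  have h := le_csSup (hN.bddAbove_inner g) ⟨(N v)⁻¹ • v,
    by rw [hN.2.1, abs_of_pos (inv_pos.2 hv'), inv_mul_cancel₀ hv'.ne'], rfl⟩
  rwa [real_inner_smul_right, inv_mul_le_iff₀ hv', mul_comm] at h

end IsNorm

theorem mirror_descent_one_step_general {p : ℕ}
    (C : Set (EuclideanSpace ℝ (Fin p))) (hC : Convex ℝ C)
    (N : EuclideanSpace ℝ (Fin p) → ℝ) (hN : IsNorm N)
    (Ψ : EuclideanSpace ℝ (Fin p) → ℝ)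
    (Ψ' : EuclideanSpace ℝ (Fin p) → EuclideanSpace ℝ (Fin p))
    (hΨdiff : ∀ x, HasGradientAt Ψ (Ψ' x) x)
    (hΨsc : ∀ x ∈ C, ∀ y ∈ C, ∀ α ∈ Set.Icc (0:ℝ) 1,
      Ψ (α • x + (1 - α) • y) ≤
        α * Ψ x + (1 - α) * Ψ y - 1 * α * (1 - α) / 2 * (N (x - y)) ^ 2)
    (η : ℝ)
    (g θt θt1 : EuclideanSpace ℝ (Fin p))
    (hθt : θt ∈ C) (hθt1 : θt1 ∈ C)
    (hmin : ∀ θ ∈ C,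
      ⟪η • g - Ψ' θt, θt1⟫ + Ψ θt1 ≤ ⟪η • g - Ψ' θt, θ⟫ + Ψ θ)
    (θs : EuclideanSpace ℝ (Fin p)) (hθs : θs ∈ C) :
    η * ⟪g, θt - θs⟫ ≤
      breg Ψ Ψ' θs θt - breg Ψ Ψ' θs θt1 + η ^ 2 / 2 * (dualNorm N g) ^ 2 := by
  have hvar : 0 ≤ ⟪η • g - Ψ' θt + Ψ' θt1, θs - θt1⟫ :=
    (isMinOn_iff.2 hmin).inner_gradient_sub_nonneg hC ((hΨdiff θt1).inner_const_add _) hθs hθt1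
  have hbreg : N (θt1 - θt) ^ 2 / 2 ≤ breg Ψ Ψ' θt1 θt :=
    le_sub_sub_inner_of_strongConvex (hΨdiff θt) fun α hα => by
      simpa only [one_mul] using hΨsc θt1 hθt1 θt hθt α hα
  have hdual : η * ⟪g, θt - θt1⟫ ≤ dualNorm N g * (|η| * N (θt1 - θt)) := by
    have h := hN.inner_le_dualNorm_mul g ((-η) • (θt1 - θt))
    rwa [hN.2.1, abs_neg, real_inner_smul_right, neg_mul, ← mul_neg, ← inner_neg_right,
      neg_sub] at h
  have hyoung : dualNorm N g * (|η| * N (θt1 - θt)) ≤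
      η ^ 2 / 2 * dualNorm N g ^ 2 + N (θt1 - θt) ^ 2 / 2 := by
    nlinarith [sq_nonneg (|η| * dualNorm N g - N (θt1 - θt)), sq_abs η]
  rw [breg_sub_breg _ _ θs θt θt1]
  simp only [inner_add_left, inner_sub_left, real_inner_smul_left, inner_sub_right]
    at hvar hdual ⊢
  linarith

/-- Mirror descent one-step progress bound. -/
theorem mirror_descent_one_step {p : ℕ}
    (C : Set (EuclideanSpace ℝ (Fin p))) (hC : Convex ℝ C)
    (N : EuclideanSpace ℝ (Fin p) → ℝ) (hN : IsNorm N)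
    (Ψ : EuclideanSpace ℝ (Fin p) → ℝ)
    (Ψ' : EuclideanSpace ℝ (Fin p) → EuclideanSpace ℝ (Fin p))
    (hΨdiff : ∀ x, HasGradientAt Ψ (Ψ' x) x)
    (hΨsc : ∀ x ∈ C, ∀ y ∈ C, ∀ α ∈ Set.Icc (0:ℝ) 1,
      Ψ (α • x + (1 - α) • y) ≤
        α * Ψ x + (1 - α) * Ψ y - 1 * α * (1 - α) / 2 * (N (x - y)) ^ 2)
    (η : ℝ) (hη : 0 < η)
    (g θt θt1 : EuclideanSpace ℝ (Fin p))
    (hθt : θt ∈ C) (hθt1 : θt1 ∈ C)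
    (hmin : ∀ θ ∈ C,
      ⟪η • g - Ψ' θt, θt1⟫ + Ψ θt1 ≤ ⟪η • g - Ψ' θt, θ⟫ + Ψ θ)
    (θs : EuclideanSpace ℝ (Fin p)) (hθs : θs ∈ C) :
    η * ⟪g, θt - θs⟫ ≤
      breg Ψ Ψ' θs θt - breg Ψ Ψ' θs θt1 + η ^ 2 / 2 * (dualNorm N g) ^ 2 :=
  mirror_descent_one_step_general C hC N hN Ψ Ψ' hΨdiff hΨsc η g θt θt1 hθt hθt1 hmin θs hθs
end

section
/- Mirror descent regret bound with constant step size: Let C ⊆ ℝ^p be a convex set, N a norm on ℝ^p, and Ψ : ℝ^p → ℝ a differentiable function that is 1-strongly convex with respect to N on C. Let η > 0, T ≥ 1, g_1, …, g_T ∈ ℝ^p, θ_1 ∈ C, and suppose for each t = 1, …, T that θ_{t+1} ∈ C attains the minimum over C of θ ↦ ⟨η·g_t − ∇Ψ(θ_t), θ⟩ + Ψ(θ). Then for every θ* ∈ C, (1/T)·Σ_{t=1}^T ⟨g_t, θ_t − θ*⟩ ≤ B_Ψ(θ*, θ_1)/(η·T) + (η/(2T))·Σ_{t=1}^T N*(g_t)².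 -/
open scoped BigOperators
open RealInnerProductSpace Topology

section AuxLemmas
variable {p : ℕ}

section NormLemmas
variable {N : EuclideanSpace ℝ (Fin p) → ℝ} (hN : IsNorm N)
include hN

lemma isnorm_zero : N 0 = 0 := by
  have := hN.2.1 0 0
  simpa using this

lemma isnorm_neg (x : EuclideanSpace ℝ (Fin p)) : N (-x) = N x := by
  have := hN.2.1 (-1) x
  simpa using this

lemma isnorm_nonneg (x : EuclideanSpace ℝ (Fin p)) : 0 ≤ N x := by
  have h := hN.1 x (-x)
  rw [add_neg_cancel, isnorm_zero hN, isnorm_neg hN] at h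
  linarith

lemma isnorm_upper : ∃ Cc : ℝ, 0 ≤ Cc ∧ ∀ x, N x ≤ Cc * ‖x‖ := by
  classical
  refine ⟨∑ i : Fin p, N (EuclideanSpace.single i 1), ?_, ?_⟩
  · exact Finset.sum_nonneg fun i _ => isnorm_nonneg hN _
  intro x
  have hx : x = ∑ i : Fin p, (x i) • EuclideanSpace.single i (1:ℝ) := by
    ext j
    rw [WithLp.ofLp_sum, Finset.sum_apply]
    simp [EuclideanSpace.single_apply]
  have hsum : ∀ (s : Finset (Fin p)),
      N (∑ i ∈ s, (x i) • EuclideanSpace.single i (1:ℝ)) ≤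
        ∑ i ∈ s, |x i| * N (EuclideanSpace.single i 1) := by
    intro s
    induction s using Finset.induction with
    | empty => simp [isnorm_zero hN]
    | insert _ _ hni ih =>
      rename_i a s'
      rw [Finset.sum_insert hni, Finset.sum_insert hni]
      calc N _ ≤ N ((x a) • EuclideanSpace.single a (1:ℝ)) +
          N (∑ i ∈ s', (x i) • EuclideanSpace.single i (1:ℝ)) := hN.1 _ _
        _ ≤ _ := by rw [hN.2.1]; linarith
  calc N x ≤ ∑ i : Fin p, |x i| * N (EuclideanSpace.single i 1) := by
        conv_lhs => rw [hx]
        exact hsum Finset.univ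
    _ ≤ ∑ i : Fin p, ‖x‖ * N (EuclideanSpace.single i 1) := by
        refine Finset.sum_le_sum fun i _ => ?_
        have h1 : |x i| ≤ ‖x‖ := by
          have hsq : ‖x i‖^2 ≤ ∑ j : Fin p, ‖x j‖^2 :=
            Finset.single_le_sum (fun j _ => sq_nonneg ‖x j‖) (Finset.mem_univ i)
          have := Real.sqrt_le_sqrt hsq
          rw [Real.sqrt_sq (norm_nonneg _), Real.norm_eq_abs] at this
          rw [EuclideanSpace.norm_eq]
          exact this
        exact mul_le_mul_of_nonneg_right h1 (isnorm_nonneg hN _)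
    _ = (∑ i : Fin p, N (EuclideanSpace.single i 1)) * ‖x‖ := by
        rw [Finset.sum_mul]; simp [mul_comm]

lemma isnorm_continuous : Continuous N := by
  obtain ⟨Cc, hCc0, hCc⟩ := isnorm_upper hN
  have hlip : LipschitzWith (Real.toNNReal Cc) N := by
    refine LipschitzWith.of_dist_le_mul fun x y => ?_
    have h1 : N x ≤ N (x - y) + N y := by
      have := hN.1 (x - y) y; simpa using this
    have h3 : N (y - x) = N (x - y) := by
      rw [← isnorm_neg hN (y - x)]; congr 1; abel
    have h2 : N y ≤ N (x - y) + N x := by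
      have := hN.1 (y - x) x
      rw [h3] at this; simpa using this
    rw [Real.dist_eq, dist_eq_norm]
    have h4 := hCc (x - y)
    have h5 : (Real.toNNReal Cc : ℝ) = Cc := Real.coe_toNNReal Cc hCc0
    rw [abs_le, h5]
    constructor <;> linarith
  have : (Real.toNNReal Cc : ℝ) = Cc := Real.coe_toNNReal Cc hCc0
  exact hlip.continuous

lemma isnorm_lower : ∃ c : ℝ, 0 < c ∧ ∀ x, c * ‖x‖ ≤ N x := by
  rcases Nat.eq_zero_or_pos p with hp | hp
  · subst hp
    refine ⟨1, one_pos, fun x => ?_⟩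
    have hx : x = 0 := Subsingleton.elim x 0
    simp [hx, isnorm_zero hN]
  · have hsph : (Metric.sphere (0 : EuclideanSpace ℝ (Fin p)) 1).Nonempty := by
      refine ⟨EuclideanSpace.single ⟨0, hp⟩ (1:ℝ), ?_⟩
      rw [mem_sphere_iff_norm, sub_zero, EuclideanSpace.norm_single]
      norm_num
    have hcomp : IsCompact (Metric.sphere (0 : EuclideanSpace ℝ (Fin p)) 1) :=
      isCompact_sphere 0 1
    obtain ⟨z, hz, hzmin'⟩ := hcomp.exists_isMinOn hsph (isnorm_continuous hN).continuousOn
    have hzmin : ∀ w ∈ Metric.sphere (0 : EuclideanSpace ℝ (Fin p)) 1, N z ≤ N w :=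
      fun w hw => hzmin' hw
    have hz0 : z ≠ 0 := by
      intro h
      rw [mem_sphere_iff_norm, h, sub_zero, norm_zero] at hz
      norm_num at hz
    have hNz : 0 < N z := by
      rcases lt_or_eq_of_le (isnorm_nonneg hN z) with h | h
      · exact h
      · exact absurd ((hN.2.2 z).1 h.symm) hz0
    refine ⟨N z, hNz, fun x => ?_⟩
    rcases eq_or_ne x 0 with h | h
    · simp [h, isnorm_zero hN]
    · have hxn : (0:ℝ) < ‖x‖ := norm_pos_iff.2 h
      have hmem : ‖x‖⁻¹ • x ∈ Metric.sphere (0 : EuclideanSpace ℝ (Fin p)) 1 := by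
        rw [mem_sphere_iff_norm, sub_zero, norm_smul]
        simp [abs_of_pos (inv_pos.2 hxn), inv_mul_cancel₀ hxn.ne']
      have := hzmin _ hmem
      rw [hN.2.1] at this
      rw [abs_of_pos (inv_pos.2 hxn)] at this
      calc N z * ‖x‖ ≤ (‖x‖⁻¹ * N x) * ‖x‖ := by nlinarith
        _ = N x := by field_simp


end NormLemmas

/-- directional derivative at a constrained minimum is nonneg -/
lemma grad_dir_nonneg {f : EuclideanSpace ℝ (Fin p) → ℝ}
    {G x v} (hf : HasGradientAt f G x)
    (h : ∀ α : ℝ, α ∈ Set.Ioc (0:ℝ) 1 → f x ≤ f (x + α • v)) : 0 ≤ ⟪G, v⟫ := by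
  set φ : ℝ → ℝ := fun α => f (x + α • v) with hφdef
  have hline : HasDerivAt (fun α : ℝ => x + α • v) v 0 := by
    simpa using ((hasDerivAt_id (0:ℝ)).smul_const v).const_add x
  have hφ : HasDerivAt φ ⟪G, v⟫ 0 := by
    have h0 : x + (0:ℝ) • v = x := by simp
    have hf' := hf.hasFDerivAt
    rw [← h0] at hf'
    have := hf'.comp_hasDerivAt 0 hline
    simpa [hφdef, InnerProductSpace.toDual_apply_apply, Function.comp_def] using this
  rw [hasDerivAt_iff_tendsto_slope] at hφ
  have hmono : 𝓝[>] (0:ℝ) ≤ 𝓝[≠] (0:ℝ) :=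
    nhdsWithin_mono 0 (fun a ha => ne_of_gt ha)
  have hφ' := hφ.mono_left hmono
  refine ge_of_tendsto hφ' ?_
  have hIoc : Set.Ioc (0:ℝ) 1 ∈ 𝓝[>] (0:ℝ) :=
    Ioc_mem_nhdsGT_of_mem (by constructor <;> norm_num)
  filter_upwards [hIoc] with α hα
  rw [slope_def_field]
  have := h α hα
  have hpos : (0:ℝ) < α := hα.1
  apply div_nonneg _ (by linarith)
  simpa [hφdef] using sub_nonneg.2 this

lemma breg_ge {C : Set (EuclideanSpace ℝ (Fin p))}
    (N : EuclideanSpace ℝ (Fin p) → ℝ)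
    {Ψ : EuclideanSpace ℝ (Fin p) → ℝ}
    {Ψ' : EuclideanSpace ℝ (Fin p) → EuclideanSpace ℝ (Fin p)}
    (hΨdiff : ∀ x, HasGradientAt Ψ (Ψ' x) x)
    (hΨsc : ∀ x ∈ C, ∀ y ∈ C, ∀ α ∈ Set.Icc (0:ℝ) 1,
      Ψ (α • x + (1 - α) • y) ≤
        α * Ψ x + (1 - α) * Ψ y - 1 * α * (1 - α) / 2 * (N (x - y)) ^ 2)
    {x y : EuclideanSpace ℝ (Fin p)} (hx : x ∈ C) (hy : y ∈ C) :
    (N (x - y)) ^ 2 / 2 ≤ Ψ x - Ψ y - ⟪Ψ' y, x - y⟫ := by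
  set v := x - y with hv
  set φ : ℝ → ℝ := fun α => Ψ (y + α • v) with hφdef
  have hline : HasDerivAt (fun α : ℝ => y + α • v) v 0 := by
    simpa using ((hasDerivAt_id (0:ℝ)).smul_const v).const_add y
  have hφ : HasDerivAt φ ⟪Ψ' y, v⟫ 0 := by
    have h0 : y + (0:ℝ) • v = y := by simp
    have hf' := (hΨdiff y).hasFDerivAt
    rw [← h0] at hf'
    have := hf'.comp_hasDerivAt 0 hline
    simpa [hφdef, InnerProductSpace.toDual_apply_apply, Function.comp_def] using this
  rw [hasDerivAt_iff_tendsto_slope] at hφ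
  have hmono : 𝓝[>] (0:ℝ) ≤ 𝓝[≠] (0:ℝ) :=
    nhdsWithin_mono 0 (fun a ha => ne_of_gt ha)
  have hφ' := hφ.mono_left hmono
  have hψ : Filter.Tendsto (fun α : ℝ => Ψ x - Ψ y - (1 - α) / 2 * (N v) ^ 2)
      (𝓝[>] (0:ℝ)) (𝓝 (Ψ x - Ψ y - (N v) ^ 2 / 2)) := by
    have hcont : Continuous (fun α : ℝ => Ψ x - Ψ y - (1 - α) / 2 * (N v) ^ 2) := by
      continuity
    have : Filter.Tendsto (fun α : ℝ => Ψ x - Ψ y - (1 - α) / 2 * (N v) ^ 2)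
        (𝓝 (0:ℝ)) (𝓝 (Ψ x - Ψ y - (1 - 0) / 2 * (N v) ^ 2)) := hcont.tendsto 0
    have heq : Ψ x - Ψ y - (1 - 0) / 2 * (N v) ^ 2 = Ψ x - Ψ y - (N v) ^ 2 / 2 := by ring
    rw [heq] at this
    exact this.mono_left nhdsWithin_le_nhds
  have hle : ⟪Ψ' y, v⟫ ≤ Ψ x - Ψ y - (N v) ^ 2 / 2 := by
    refine le_of_tendsto_of_tendsto hφ' hψ ?_
    have hIoc : Set.Ioc (0:ℝ) 1 ∈ 𝓝[>] (0:ℝ) :=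
      Ioc_mem_nhdsGT_of_mem (by constructor <;> norm_num)
    filter_upwards [hIoc] with α hα
    have hpos : (0:ℝ) < α := hα.1
    have hkey := hΨsc x hx y hy α ⟨le_of_lt hpos, hα.2⟩
    have hpt : α • x + (1 - α) • y = y + α • v := by
      rw [hv]; module
    rw [hpt] at hkey
    rw [slope_def_field, sub_zero, div_le_iff₀ hpos]
    have hφ0 : φ 0 = Ψ y := by simp [hφdef]
    have hφα : φ α = Ψ (y + α • v) := rfl
    rw [← hv] at hkey
    rw [hφ0, hφα]
    nlinarith [hkey]
  linarith

/-- dual norm bound -/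
lemma dual_bound {N : EuclideanSpace ℝ (Fin p) → ℝ}
    (hN : IsNorm N) (g v : EuclideanSpace ℝ (Fin p)) :
    ⟪g, v⟫ ≤ dualNorm N g * N v := by
  obtain ⟨c, hc, hlow⟩ := isnorm_lower hN
  have hbdd : BddAbove {r : ℝ | ∃ w : EuclideanSpace ℝ (Fin p), N w ≤ 1 ∧ r = ⟪g, w⟫} := by
    refine ⟨‖g‖ * (1 / c), ?_⟩
    rintro r ⟨w, hw, rfl⟩
    have h1 : ‖w‖ ≤ 1 / c := by
      have := hlow w
      rw [le_div_iff₀ hc, mul_comm]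
      linarith
    calc ⟪g, w⟫ ≤ ‖g‖ * ‖w‖ := real_inner_le_norm g w
      _ ≤ ‖g‖ * (1 / c) := by
          exact mul_le_mul_of_nonneg_left h1 (norm_nonneg g)
  rcases eq_or_lt_of_le (isnorm_nonneg hN v) with h | h
  · have hv0 : v = 0 := (hN.2.2 v).1 h.symm
    rw [hv0, inner_zero_right, isnorm_zero hN, mul_zero]
  · have hmem : ⟪g, (N v)⁻¹ • v⟫ ∈
        {r : ℝ | ∃ w : EuclideanSpace ℝ (Fin p), N w ≤ 1 ∧ r = ⟪g, w⟫} := by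
      refine ⟨(N v)⁻¹ • v, ?_, rfl⟩
      rw [hN.2.1, abs_of_pos (inv_pos.2 h), inv_mul_cancel₀ h.ne']
    have hsup := le_csSup hbdd hmem
    rw [real_inner_smul_right] at hsup
    calc ⟪g, v⟫ = N v * ((N v)⁻¹ * ⟪g, v⟫) := by field_simp
      _ ≤ N v * dualNorm N g := mul_le_mul_of_nonneg_left hsup (le_of_lt h)
      _ = dualNorm N g * N v := mul_comm _ _



/-- gradient of `u ↦ ⟪a, u⟫ + Ψ u` -/
lemma hasGradientAt_inner_add {Ψ : EuclideanSpace ℝ (Fin p) → ℝ}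
    {a G u : EuclideanSpace ℝ (Fin p)} (hΨ : HasGradientAt Ψ G u) :
    HasGradientAt (fun w => ⟪a, w⟫ + Ψ w) (a + G) u := by
  rw [hasGradientAt_iff_hasFDerivAt] at hΨ ⊢
  have h1 : HasFDerivAt (fun w : EuclideanSpace ℝ (Fin p) => ⟪a, w⟫)
      (InnerProductSpace.toDual ℝ (EuclideanSpace ℝ (Fin p)) a) u := by
    exact (InnerProductSpace.toDual ℝ (EuclideanSpace ℝ (Fin p)) a).hasFDerivAt
  have h2 := h1.add hΨ
  rwa [← map_add] at h2

end AuxLemmas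

/-- Mirror descent regret bound with constant step size. -/
theorem mirror_descent_regret {p : ℕ}
    (C : Set (EuclideanSpace ℝ (Fin p))) (hC : Convex ℝ C)
    (N : EuclideanSpace ℝ (Fin p) → ℝ) (hN : IsNorm N)
    (Ψ : EuclideanSpace ℝ (Fin p) → ℝ)
    (Ψ' : EuclideanSpace ℝ (Fin p) → EuclideanSpace ℝ (Fin p))
    (hΨdiff : ∀ x, HasGradientAt Ψ (Ψ' x) x)
    (hΨsc : ∀ x ∈ C, ∀ y ∈ C, ∀ α ∈ Set.Icc (0:ℝ) 1,
      Ψ (α • x + (1 - α) • y) ≤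
        α * Ψ x + (1 - α) * Ψ y - 1 * α * (1 - α) / 2 * (N (x - y)) ^ 2)
    (η : ℝ) (hη : 0 < η) (T : ℕ) (hT : 1 ≤ T)
    (g θ : ℕ → EuclideanSpace ℝ (Fin p))
    (hθ1 : θ 1 ∈ C)
    (hstep : ∀ t ∈ Finset.Icc 1 T, θ (t + 1) ∈ C ∧
      ∀ u ∈ C, ⟪η • g t - Ψ' (θ t), θ (t + 1)⟫ + Ψ (θ (t + 1)) ≤
        ⟪η • g t - Ψ' (θ t), u⟫ + Ψ u)
    (θs : EuclideanSpace ℝ (Fin p)) (hθs : θs ∈ C) :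
    1 / (T : ℝ) * ∑ t ∈ Finset.Icc 1 T, ⟪g t, θ t - θs⟫ ≤
      breg Ψ Ψ' θs (θ 1) / (η * T) +
        η / (2 * T) * ∑ t ∈ Finset.Icc 1 T, (dualNorm N (g t)) ^ 2 := by
  -- membership
  have hmem : ∀ t : ℕ, 1 ≤ t → t ≤ T + 1 → θ t ∈ C := by
    intro t ht1 ht2
    match t, ht1 with
    | 1, _ => exact hθ1
    | (s+2), _ =>
      exact (hstep (s+1) (Finset.mem_Icc.2 ⟨by omega, by omega⟩)).1
  set b : ℕ → ℝ := fun t => breg Ψ Ψ' θs (θ t) with hb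
  -- per-step inequality
  have key : ∀ t ∈ Finset.Icc 1 T,
      η * ⟪g t, θ t - θs⟫ ≤ (b t - b (t+1))
        + η^2/2 * (dualNorm N (g t))^2 := by
    intro t ht
    rw [Finset.mem_Icc] at ht
    have hθt : θ t ∈ C := hmem t ht.1 (by omega)
    have hθt1 : θ (t+1) ∈ C := (hstep t (Finset.mem_Icc.2 ht)).1
    have hopt := (hstep t (Finset.mem_Icc.2 ht)).2
    -- first-order optimality
    have hD : 0 ≤ ⟪(η • g t - Ψ' (θ t)) + Ψ' (θ (t+1)), θs - θ (t+1)⟫ := by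
      refine grad_dir_nonneg (hasGradientAt_inner_add (hΨdiff (θ (t+1)))) ?_
      intro α hα
      have hmemC : θ (t+1) + α • (θs - θ (t+1)) ∈ C := by
        have heq : θ (t+1) + α • (θs - θ (t+1)) = (1 - α) • θ (t+1) + α • θs := by
          module
        rw [heq]
        exact hC hθt1 hθs (by linarith [hα.2]) (le_of_lt hα.1) (by ring)
      exact hopt _ hmemC
    have h1 : η * ⟪g t, θ (t+1) - θs⟫ ≤ ⟪Ψ' (θ t) - Ψ' (θ (t+1)), θ (t+1) - θs⟫ := by
      simp only [inner_sub_left, inner_add_left, inner_sub_right,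
        real_inner_smul_left] at hD ⊢
      linarith
    have hbregid : ⟪Ψ' (θ t) - Ψ' (θ (t+1)), θ (t+1) - θs⟫ =
        b t - b (t+1) - breg Ψ Ψ' (θ (t+1)) (θ t) := by
      simp only [hb, breg, inner_sub_left, inner_sub_right]
      ring
    have h2 : (N (θ (t+1) - θ t))^2 / 2 ≤ breg Ψ Ψ' (θ (t+1)) (θ t) := by
      have := breg_ge N hΨdiff hΨsc hθt1 hθt
      simpa [breg] using this
    have h3 : ⟪g t, θ t - θ (t+1)⟫ ≤ dualNorm N (g t) * N (θ t - θ (t+1)) :=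
      dual_bound hN _ _
    have hNneg : N (θ t - θ (t+1)) = N (θ (t+1) - θ t) := by
      rw [← isnorm_neg hN (θ (t+1) - θ t)]
      congr 1
      abel
    have hsplit : ⟪g t, θ t - θs⟫ = ⟪g t, θ t - θ (t+1)⟫ + ⟪g t, θ (t+1) - θs⟫ := by
      simp only [inner_sub_right]
      ring
    have h3' : η * ⟪g t, θ t - θ (t+1)⟫ ≤ η * (dualNorm N (g t) * N (θ t - θ (t+1))) :=
      mul_le_mul_of_nonneg_left h3 hη.le
    have hamgm : η * (dualNorm N (g t) * N (θ t - θ (t+1))) ≤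
        η^2/2 * (dualNorm N (g t))^2 + (N (θ (t+1) - θ t))^2 / 2 := by
      rw [← hNneg]
      nlinarith [sq_nonneg (η * dualNorm N (g t) - N (θ t - θ (t+1)))]
    rw [hsplit, mul_add]
    linarith
  -- sum the per-step inequalities
  have hsum := Finset.sum_le_sum key
  -- telescoping
  have htel : ∑ t ∈ Finset.Icc 1 T, (b t - b (t+1)) = b 1 - b (T+1) := by
    have h1 := Finset.sum_range_sub (fun i => b (i+1)) T
    have h2 : ∑ t ∈ Finset.Icc 1 T, (b t - b (t+1)) =
        ∑ i ∈ Finset.range T, (b (i+1) - b (i+1+1)) := by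
      rw [← Finset.Ico_add_one_right_eq_Icc, Finset.sum_Ico_eq_sum_range]
      simp only [Nat.add_sub_cancel, Nat.succ_sub_one]
      exact Finset.sum_congr rfl fun i _ => by rw [add_comm 1 i]
    rw [h2]
    have h3 : ∑ i ∈ Finset.range T, (b (i+1) - b (i+1+1)) =
        -∑ i ∈ Finset.range T, (b (i+1+1) - b (i+1)) := by
      rw [← Finset.sum_neg_distrib]
      exact Finset.sum_congr rfl fun i _ => by ring
    rw [h3, h1]
    ring
  -- nonnegativity of final Bregman divergence
  have hBT : 0 ≤ b (T+1) := by
    have hθT1 : θ (T+1) ∈ C := hmem (T+1) (by omega) le_rfl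
    have := breg_ge N hΨdiff hΨsc hθs hθT1
    have h4 : (0:ℝ) ≤ (N (θs - θ (T+1)))^2 / 2 := by positivity
    simp only [hb, breg]
    linarith
  set S := ∑ t ∈ Finset.Icc 1 T, ⟪g t, θ t - θs⟫ with hS
  set D := ∑ t ∈ Finset.Icc 1 T, (dualNorm N (g t))^2 with hD2
  have hmain : η * S ≤ b 1 + η^2/2 * D := by
    have h5 : ∑ t ∈ Finset.Icc 1 T, η * ⟪g t, θ t - θs⟫ = η * S := by
      rw [hS, Finset.mul_sum]
    have h6 : ∑ t ∈ Finset.Icc 1 T, ((b t - b (t+1)) + η^2/2 * (dualNorm N (g t))^2)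
        = (b 1 - b (T+1)) + η^2/2 * D := by
      rw [Finset.sum_add_distrib, htel, hD2, Finset.mul_sum]
    rw [h5, h6] at hsum
    linarith
  have hTpos : (0:ℝ) < T := by
    have : (1:ℝ) ≤ (T:ℝ) := by exact_mod_cast hT
    linarith
  have hηT : (0:ℝ) < η * T := by positivity
  have hcalc : 1 / (T:ℝ) * S = (η * S) / (η * T) := by
    field_simp
  rw [hcalc]
  have hstep2 : (η * S) / (η * T) ≤ (b 1 + η^2/2 * D) / (η * T) := by
    gcongr
  calc (η * S) / (η * T) ≤ (b 1 + η^2/2 * D) / (η * T) := hstep2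
    _ = b 1 / (η * T) + η / (2 * T) * D := by
        field_simp
end

section
/- Deterministic excess-risk bound for objective perturbation (Lipschitz case): Let C ⊆ ℝ^p, let L : ℝ^p → ℝ, let θ₀ ∈ ℝ^p, ζ ≥ 0, and b ∈ ℝ^p, and define J(θ) = L(θ) + (ζ/2)·‖θ − θ₀‖₂². Suppose θ̂ ∈ C attains the minimum of J over C, θ^priv ∈ C attains the minimum over C of θ ↦ J(θ) + ⟨b, θ⟩, and θ* ∈ C attains the minimum of L over C. Then L(θ^priv) − L(θ*) ≤ ⟨b, θ̂ − θ^priv⟩ + (ζ/2)·‖θ* − θ₀‖₂². -/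
open RealInnerProductSpace

/-! Comparing `θpriv` with `θhat`, and then `θhat` with `θs`, gives
`J θpriv ≤ J θs + ⟪b, θhat - θpriv⟫`; the left side dominates `L θpriv` because the
regulariser is nonnegative, and the right side is `L θs + ζ/2 ‖θs - θ0‖² + ⟪b, θhat - θpriv⟫`. -/

lemma le_add_sub_of_perturbed_min {α : Type*} {C : Set α} {J f : α → ℝ} {x y z : α}
    (hy : y ∈ C) (hz : z ∈ C) (hx : ∀ θ ∈ C, J x + f x ≤ J θ + f θ)
    (hyJ : ∀ θ ∈ C, J y ≤ J θ) :
    J x ≤ J z + (f y - f x) := by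
  linarith [hx y hy, hyJ z hz]

theorem objective_perturbation_lipschitz_general {p : ℕ}
    (C : Set (EuclideanSpace ℝ (Fin p)))
    (L : EuclideanSpace ℝ (Fin p) → ℝ)
    (θ0 : EuclideanSpace ℝ (Fin p)) (ζ : ℝ) (hζ : 0 ≤ ζ)
    (b : EuclideanSpace ℝ (Fin p))
    (J : EuclideanSpace ℝ (Fin p) → ℝ)
    (hJ : ∀ θ, J θ = L θ + ζ / 2 * ‖θ - θ0‖ ^ 2)
    (θhat : EuclideanSpace ℝ (Fin p)) (hθhat : θhat ∈ C)
    (hminJ : ∀ θ ∈ C, J θhat ≤ J θ)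
    (θpriv : EuclideanSpace ℝ (Fin p))
    (hminpriv : ∀ θ ∈ C, J θpriv + ⟪b, θpriv⟫ ≤ J θ + ⟪b, θ⟫)
    (θs : EuclideanSpace ℝ (Fin p)) (hθs : θs ∈ C) :
    L θpriv - L θs ≤ ⟪b, θhat - θpriv⟫ + ζ / 2 * ‖θs - θ0‖ ^ 2 := by
  have hJ_le : J θpriv ≤ J θs + (⟪b, θhat⟫ - ⟪b, θpriv⟫) :=
    le_add_sub_of_perturbed_min hθhat hθs hminpriv hminJ
  have hL_le_J : L θpriv ≤ J θpriv := by
    rw [hJ θpriv]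
    have : 0 ≤ ζ / 2 * ‖θpriv - θ0‖ ^ 2 := by positivity
    linarith
  rw [inner_sub_right]
  linarith [hJ θs]

/-- Deterministic excess-risk bound for objective perturbation (Lipschitz case). -/
theorem objective_perturbation_lipschitz {p : ℕ}
    (C : Set (EuclideanSpace ℝ (Fin p)))
    (L : EuclideanSpace ℝ (Fin p) → ℝ)
    (θ0 : EuclideanSpace ℝ (Fin p)) (ζ : ℝ) (hζ : 0 ≤ ζ)
    (b : EuclideanSpace ℝ (Fin p))
    (J : EuclideanSpace ℝ (Fin p) → ℝ)
    (hJ : ∀ θ, J θ = L θ + ζ / 2 * ‖θ - θ0‖ ^ 2)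
    (θhat : EuclideanSpace ℝ (Fin p)) (hθhat : θhat ∈ C)
    (hminJ : ∀ θ ∈ C, J θhat ≤ J θ)
    (θpriv : EuclideanSpace ℝ (Fin p)) (hθpriv : θpriv ∈ C)
    (hminpriv : ∀ θ ∈ C, J θpriv + ⟪b, θpriv⟫ ≤ J θ + ⟪b, θ⟫)
    (θs : EuclideanSpace ℝ (Fin p)) (hθs : θs ∈ C)
    (hminL : ∀ θ ∈ C, L θs ≤ L θ) :
    L θpriv - L θs ≤ ⟪b, θhat - θpriv⟫ + ζ / 2 * ‖θs - θ0‖ ^ 2 :=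
  objective_perturbation_lipschitz_general C L θ0 ζ hζ b J hJ θhat hθhat hminJ θpriv hminpriv θs hθs
end

section
/- Small loss of the consensus-sign model in the lower-bound construction: Let τ = 1/1000, let w, p ≥ 1 be integers, and let x_1, …, x_w ∈ {−1, 1}^p. Let W ⊆ {1, …, p} with |W| ≥ (1 − τ)·p and s : {1, …, p} → {−1, 1} be such that x_i(j) = s(j) for every i ∈ {1, …, w} and every j ∈ W (W is a set of consensus coordinates with signs s). Let θ* ∈ ℝ^p be any vector with θ*(j) ∈ {−1/p, 1/p} for all j and θ*(j) = s(j)/p for all j ∈ W. Then for any real k with 0 ≤ k ≤ τ·w·p, Σ_{i=1}^w (⟨x_i, θ*⟩ − 1)² + k·‖θ*‖₂² ≤ (τ + 4τ²)·w. -/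
/-!
On a consensus coordinate `j ∈ W` every summand `x i j * θ* j` equals `1 / p`, so
`⟨x_i, θ*⟩ - 1 = ∑_j (x i j * θ* j - 1 / p)` only collects the at most `τ p` coordinates
outside `W`, each contributing at most `2 / p`. Hence every residual is at most `2τ` in absolute
value, while `‖θ*‖₂² = 1 / p` makes the penalty at most `τ w`.
-/

open Finset

section

variable {ι : Type*} [Fintype ι]

theorem sum_sq_eq_card_mul_sq_of_abs_eq {θ : ι → ℝ} {c : ℝ} (hθ : ∀ j, |θ j| = c) :
    ∑ j, θ j ^ 2 = Fintype.card ι * c ^ 2 := by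
  calc ∑ j, θ j ^ 2 = ∑ _j : ι, c ^ 2 := sum_congr rfl fun j _ => by rw [← sq_abs, hθ j]
    _ = Fintype.card ι * c ^ 2 := by simp

theorem card_compl_le_mul_card [DecidableEq ι] {W : Finset ι} {τ : ℝ}
    (hW : (1 - τ) * Fintype.card ι ≤ #W) : (#Wᶜ : ℝ) ≤ τ * Fintype.card ι := by
  have hcard : (#W + #Wᶜ : ℝ) = Fintype.card ι := by exact_mod_cast card_add_card_compl W
  linarith

theorem abs_sum_mul_sub_card_mul_le [DecidableEq ι] {a θ : ι → ℝ} {c : ℝ} (W : Finset ι)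
    (ha : ∀ j, |a j| = 1) (hθ : ∀ j, |θ j| = c) (hθW : ∀ j ∈ W, θ j = a j * c) :
    |∑ j, a j * θ j - Fintype.card ι * c| ≤ 2 * c * #Wᶜ := by
  have hW : ∑ j ∈ W, (a j * θ j - c) = 0 := by
    refine sum_eq_zero fun j hj => ?_
    rw [hθW j hj, ← mul_assoc, ← sq, ← sq_abs, ha j]
    ring
  have hterm : ∀ j, |a j * θ j - c| ≤ 2 * c := fun j =>
    calc |a j * θ j - c| ≤ |a j * θ j| + |c| := abs_sub _ _
      _ = 2 * c := by rw [abs_mul, ha j, hθ j, ← hθ j, abs_abs]; ring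
  calc |∑ j, a j * θ j - Fintype.card ι * c|
      = |∑ j, (a j * θ j - c)| := by simp [sum_sub_distrib]
    _ = |∑ j ∈ Wᶜ, (a j * θ j - c)| := by rw [← sum_add_sum_compl W, hW, zero_add]
    _ ≤ ∑ j ∈ Wᶜ, |a j * θ j - c| := abs_sum_le_sum_abs _ _
    _ ≤ #Wᶜ • (2 * c) := sum_le_card_nsmul _ _ _ fun j _ => hterm j
    _ = 2 * c * #Wᶜ := by rw [nsmul_eq_mul, mul_comm]

end

theorem consensus_model_small_loss_general {w p : ℕ} (hp : 1 ≤ p)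
    (τ : ℝ)
    (x : Fin w → Fin p → ℝ) (hx : ∀ i j, x i j = 1 ∨ x i j = -1)
    (W : Finset (Fin p)) (hW : (1 - τ) * p ≤ W.card)
    (s : Fin p → ℝ)
    (hcons : ∀ i, ∀ j ∈ W, x i j = s j)
    (θs : Fin p → ℝ)
    (hθ : ∀ j, θs j = 1 / p ∨ θs j = -(1 / p))
    (hθW : ∀ j ∈ W, θs j = s j / p)
    (k : ℝ) (hk1 : k ≤ τ * w * p) :
    ∑ i, (∑ j, x i j * θs j - 1) ^ 2 + k * ∑ j, (θs j) ^ 2 ≤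
      (τ + 4 * τ ^ 2) * w := by
  have hp' : (0 : ℝ) < p := by exact_mod_cast hp
  have habsθ : ∀ j, |θs j| = 1 / p := fun j => (abs_eq (by positivity)).2 (hθ j)
  have habsx : ∀ i j, |x i j| = 1 := fun i j => (abs_eq zero_le_one).2 (hx i j)
  have hnorm : ∑ j, θs j ^ 2 = 1 / p := by
    rw [sum_sq_eq_card_mul_sq_of_abs_eq habsθ, Fintype.card_fin]
    field_simp
  have hcompl : (#Wᶜ : ℝ) ≤ τ * p := by
    simpa using card_compl_le_mul_card (ι := Fin p) (by simpa using hW)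
  have hrow : ∀ i, (∑ j, x i j * θs j - 1) ^ 2 ≤ (2 * τ) ^ 2 := by
    intro i
    have h := abs_sum_mul_sub_card_mul_le W (habsx i) habsθ fun j hj => by
      rw [hθW j hj, hcons i j hj, mul_one_div]
    rw [Fintype.card_fin, mul_one_div_cancel hp'.ne'] at h
    have h2τ : 2 * (1 / p) * (#Wᶜ : ℝ) ≤ 2 * τ := by
      rw [mul_assoc, one_div_mul_eq_div]
      gcongr
      rwa [div_le_iff₀ hp']
    exact sq_le_sq.2 ((h.trans h2τ).trans (le_abs_self _))
  have hpenalty : k * ∑ j, θs j ^ 2 ≤ τ * w := by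
    rw [hnorm, mul_one_div, div_le_iff₀ hp']
    exact hk1
  calc ∑ i, (∑ j, x i j * θs j - 1) ^ 2 + k * ∑ j, θs j ^ 2
      ≤ ∑ _i : Fin w, (2 * τ) ^ 2 + τ * w := add_le_add (sum_le_sum fun i _ => hrow i) hpenalty
    _ = (τ + 4 * τ ^ 2) * w := by
      simp only [sum_const, card_univ, Fintype.card_fin, nsmul_eq_mul]; ring

/-- Small loss of the consensus-sign model in the lower-bound construction. -/
theorem consensus_model_small_loss {w p : ℕ} (hw : 1 ≤ w) (hp : 1 ≤ p)
    (τ : ℝ) (hτ : τ = 1 / 1000)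
    (x : Fin w → Fin p → ℝ) (hx : ∀ i j, x i j = 1 ∨ x i j = -1)
    (W : Finset (Fin p)) (hW : (1 - τ) * p ≤ W.card)
    (s : Fin p → ℝ) (hs : ∀ j, s j = 1 ∨ s j = -1)
    (hcons : ∀ i, ∀ j ∈ W, x i j = s j)
    (θs : Fin p → ℝ)
    (hθ : ∀ j, θs j = 1 / p ∨ θs j = -(1 / p))
    (hθW : ∀ j ∈ W, θs j = s j / p)
    (k : ℝ) (hk0 : 0 ≤ k) (hk1 : k ≤ τ * w * p) :
    ∑ i, (∑ j, x i j * θs j - 1) ^ 2 + k * ∑ j, (θs j) ^ 2 ≤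
      (τ + 4 * τ ^ 2) * w :=
  consensus_model_small_loss_general hp τ x hx W hW s hcons θs hθ hθW k hk1
end

section
/- Key combinatorial lemma for the LASSO lower bound: Let τ = 1/1000, let w, p ≥ 1 be integers, and let x_1, …, x_w ∈ {−1, 1}^p. Let W ⊆ {1, …, p} with |W| ≥ (1 − τ)·p and s : {1, …, p} → {−1, 1} be such that x_i(j) = s(j) for every i ∈ {1, …, w} and every j ∈ W (W is a set of consensus coordinates with signs s). Let k be a real number with k ≥ τ·w·p, and let θ ∈ ℝ^p satisfy ‖θ‖₁ ≤ 1 and Σ_{i=1}^w (⟨x_i, θ⟩ − 1)² + k·‖θ‖₂² < 1.1·τ·w. Then |{ j ∈ W : s(j)·θ(j) > 0 }| ≥ (3/4)·p. -/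
/-!
From `k ≥ τ w p` the ridge term forces `p ‖θ‖₂² < 1.1`, and averaging the loss over the samples
gives one sample `x` with `(⟨x, θ⟩ - 1)² < 1.1 τ`, so `⟨x, θ⟩ > 0.9668`. On `W` the vector `x`
equals `s`, so `⟨x, θ⟩` is at most the ℓ₁ mass of `θ` on the agreement set `G` plus its ℓ₁ mass
off `W`. By Cauchy–Schwarz the mass on a set `A` is at most `√(#A ‖θ‖₂²)`; off `W` this is below
`0.0332`, so the mass on `G` exceeds `0.9336`, i.e. `#G ‖θ‖₂² > 0.825 > (3/4) p ‖θ‖₂²`.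
-/

open scoped BigOperators Classical

open Finset

lemma sq_sum_abs_le_card_mul_sum_sq {ι : Type*} [Fintype ι] (A : Finset ι) (θ : ι → ℝ) :
    (∑ j ∈ A, |θ j|) ^ 2 ≤ #A * ∑ j, θ j ^ 2 := by
  calc (∑ j ∈ A, |θ j|) ^ 2 ≤ #A * ∑ j ∈ A, |θ j| ^ 2 := sq_sum_le_card_mul_sum_sq
    _ ≤ #A * ∑ j, θ j ^ 2 := by
      simp only [sq_abs]
      exact mul_le_mul_of_nonneg_left (sum_le_univ_sum_of_nonneg fun j => sq_nonneg _)
        (Nat.cast_nonneg _)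

lemma sum_mul_le_sum_abs_agree_add_sum_abs_compl {ι : Type*} [Fintype ι] [DecidableEq ι]
    (W : Finset ι) (s x θ : ι → ℝ) (hx : ∀ j, |x j| ≤ 1) (hcons : ∀ j ∈ W, x j = s j) :
    ∑ j, x j * θ j ≤ ∑ j ∈ W.filter (fun j => 0 < s j * θ j), |θ j| + ∑ j ∈ Wᶜ, |θ j| := by
  have hle_abs : ∀ j, x j * θ j ≤ |θ j| := fun j =>
    (le_abs_self _).trans (by rw [abs_mul]; exact mul_le_of_le_one_left (abs_nonneg _) (hx j))
  rw [← sum_add_sum_compl W, sum_filter]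
  gcongr with j hj j
  · split_ifs with hpos
    · exact hle_abs j
    · rw [hcons j hj]; exact not_lt.1 hpos
  · exact hle_abs j

lemma sq_gt_of_near_one_le_add {a b S : ℝ} (ha : 0 ≤ a) (hb : b ^ 2 < 0.0011)
    (hS : (S - 1) ^ 2 < 0.0011) (hSab : S ≤ a + b) : 0.825 < a ^ 2 := by
  have hb' : b < 0.0332 := by nlinarith
  have hS' : 0.9668 < S := by nlinarith
  nlinarith

theorem lasso_lower_bound_sign_agreement_general {w p : ℕ}
    (τ : ℝ) (hτ : τ = 1 / 1000)
    (x : Fin w → Fin p → ℝ) (hx : ∀ i j, x i j = 1 ∨ x i j = -1)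
    (W : Finset (Fin p)) (hW : (1 - τ) * p ≤ W.card)
    (s : Fin p → ℝ)
    (hcons : ∀ i, ∀ j ∈ W, x i j = s j)
    (k : ℝ) (hk : τ * w * p ≤ k)
    (θ : Fin p → ℝ)
    (hloss : ∑ i, (∑ j, x i j * θ j - 1) ^ 2 + k * ∑ j, (θ j) ^ 2 < 1.1 * τ * w) :
    (3 : ℝ) / 4 * p ≤ ((W.filter fun j => 0 < s j * θ j).card : ℝ) := by
  subst hτ
  set q := ∑ j, θ j ^ 2
  have hq : 0 ≤ q := by positivity
  have hloss_nonneg : 0 ≤ ∑ i, (∑ j, x i j * θ j - 1) ^ 2 := by positivity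
  have hkq : 0 ≤ k * q := mul_nonneg ((by positivity : (0 : ℝ) ≤ 1 / 1000 * w * p).trans hk) hq
  have hpq : p * q < 1.1 := by
    have : 1 / 1000 * w * (p * q - 1.1) < 0 := by nlinarith
    exact sub_neg.1 (neg_of_mul_neg_right this (by positivity))
  obtain ⟨i, -, hi⟩ : ∃ i ∈ univ, (∑ j, x i j * θ j - 1) ^ 2 < 1.1 * (1 / 1000) :=
    exists_lt_of_sum_lt <| by
      simp only [sum_const, card_univ, Fintype.card_fin, nsmul_eq_mul]
      linarith
  have hinner := sum_mul_le_sum_abs_agree_add_sum_abs_compl W s (x i) θ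
    (fun j => by rcases hx i j with h | h <;> simp [h]) (hcons i)
  have hcard_compl : (#Wᶜ : ℝ) ≤ 1 / 1000 * p := by
    rw [card_compl, Fintype.card_fin, Nat.cast_sub (by simpa using card_le_univ W)]
    linarith
  have hagree := sq_sum_abs_le_card_mul_sum_sq (W.filter fun j => 0 < s j * θ j) θ
  have hcompl := sq_sum_abs_le_card_mul_sum_sq Wᶜ θ
  have hmass := sq_gt_of_near_one_le_add (by positivity) (by nlinarith) (by linarith) hinner
  nlinarith

/-- Key combinatorial lemma for the LASSO lower bound: a unit-ℓ₁-norm model with small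
regularized loss must agree in sign with the consensus signs on at least `(3/4)·p`
coordinates of `W`. -/
theorem lasso_lower_bound_sign_agreement {w p : ℕ} (hw : 1 ≤ w) (hp : 1 ≤ p)
    (τ : ℝ) (hτ : τ = 1 / 1000)
    (x : Fin w → Fin p → ℝ) (hx : ∀ i j, x i j = 1 ∨ x i j = -1)
    (W : Finset (Fin p)) (hW : (1 - τ) * p ≤ W.card)
    (s : Fin p → ℝ) (hs : ∀ j, s j = 1 ∨ s j = -1)
    (hcons : ∀ i, ∀ j ∈ W, x i j = s j)
    (k : ℝ) (hk : τ * w * p ≤ k)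
    (θ : Fin p → ℝ) (hθ1 : ∑ j, |θ j| ≤ 1)
    (hloss : ∑ i, (∑ j, x i j * θ j - 1) ^ 2 + k * ∑ j, (θ j) ^ 2 < 1.1 * τ * w) :
    (3 : ℝ) / 4 * p ≤ ((W.filter fun j => 0 < s j * θ j).card : ℝ) :=
  lasso_lower_bound_sign_agreement_general τ hτ x hx W hW s hcons k hk θ hloss
end
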